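/- Let A be a connected Artin algebra with rad(A)² = 0 and U a simple non-injective A-module. Then the irreducible morphisms from U to indecomposable modules are exactly the embeddings U → P_i into non-simple indecomposable projective modules P_i (as copies of U inside rad P_i). -/

import Mathlib

/-!
Write `rad M = J • M` with `J` the Jacobson radical. Since `J² = 0`, both `rad M` and
`M / rad M` are killed by `J`, hence semisimple, and `W + rad M = M` forces `W = M`, since
then `M = W + J(W + JM) ⊆ W`.

An irreducible `f : U → N` does not split, so `f U ⊆ rad N` (otherwise `U` would split off the
semisimple top of `N`). Lifting `f` along a free cover `p : F → N` inside the semisimple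
`rad F`, irreducibility forces `p` to split (a retraction of `U → rad F` would give
`U = rad U`), so `N` is projective; `N` is not simple since then `f` would be an isomorphism.

Conversely, idempotents lift along the square-zero kernel of `End N → End (N / rad N)`, so the
top of an indecomposable projective `N` is indecomposable and semisimple, hence simple. Given
`f = h ∘ g` with `h : L → N` not surjective, `h L ⊆ rad N`; as `rad N` is semisimple the
embedding `U → rad N` retracts, and that retraction composed with `h` retracts `g`.
-/

universe u

section
variable (A : Type u) [Ring A]

/-- A split monomorphism of `A`-modules. -/
def IsSplitMonoLM {M N : Type u} [AddCommGroup M] [Module A M] [AddCommGroup N] [Module A N]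
    (f : M →ₗ[A] N) : Prop :=
  ∃ g : N →ₗ[A] M, g ∘ₗ f = LinearMap.id

/-- A split epimorphism of `A`-modules. -/
def IsSplitEpiLM {M N : Type u} [AddCommGroup M] [Module A M] [AddCommGroup N] [Module A N]
    (f : M →ₗ[A] N) : Prop :=
  ∃ g : N →ₗ[A] M, f ∘ₗ g = LinearMap.id

/-- `f` is an irreducible morphism in the category `A-mod` of finite `A`-modules:
it is neither a split monomorphism nor a split epimorphism, and in any factorization
`f = h ∘ g` through a finite module, `g` is a split mono or `h` is a split epi. -/
def IsIrreducibleLM {M N : Type u} [AddCommGroup M] [Module A M] [AddCommGroup N] [Module A N]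
    (f : M →ₗ[A] N) : Prop :=
  ¬ IsSplitMonoLM A f ∧ ¬ IsSplitEpiLM A f ∧
    ∀ (L : Type u) [AddCommGroup L] [Module A L] [Module.Finite A L]
      (g : M →ₗ[A] L) (h : L →ₗ[A] N), f = h ∘ₗ g → IsSplitMonoLM A g ∨ IsSplitEpiLM A h

/-- A module is indecomposable if it is nonzero and its only idempotent endomorphisms are
`0` and the identity. -/
def IsIndecomposableModule (M : Type u) [AddCommGroup M] [Module A M] : Prop :=
  Nontrivial M ∧ ∀ f : M →ₗ[A] M, f ∘ₗ f = f → f = 0 ∨ f = LinearMap.id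

end

open Submodule LinearMap

section SquareZeroRadical

variable {A : Type*} [Ring A] {J : Ideal A}
variable {M N P : Type*} [AddCommGroup M] [Module A M] [AddCommGroup N] [Module A N]
  [AddCommGroup P] [Module A P]

theorem smul_smul_top_eq_bot (hJ : J * J = ⊥) : J • J • (⊤ : Submodule A M) = ⊥ := by
  rw [← Submodule.smul_assoc, Ideal.smul_eq_mul, hJ, Submodule.bot_smul]

theorem eq_top_of_sup_smul_top_eq_top (hJ : J * J = ⊥) {W : Submodule A M}
    (hW : W ⊔ J • ⊤ = ⊤) : W = ⊤ :=
  calc W = W ⊔ J • W := (sup_eq_left.mpr smul_le_right).symm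
    _ = W ⊔ J • (W ⊔ J • ⊤) := by rw [smul_sup, smul_smul_top_eq_bot hJ, sup_bot_eq]
    _ = ⊤ := by rw [hW, hW]

theorem smul_top_ne_top [Nontrivial M] (hJ : J * J = ⊥) : J • (⊤ : Submodule A M) ≠ ⊤ :=
  fun h ↦ bot_ne_top (eq_top_of_sup_smul_top_eq_top hJ (W := ⊥) (by simpa using h))

theorem range_le_smul_top_of_not_surjective (hJ : J * J = ⊥)
    (hN : IsCoatom (J • (⊤ : Submodule A N))) {h : M →ₗ[A] N}
    (hh : ¬ Function.Surjective h) : range h ≤ J • ⊤ := by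
  rcases hN.le_iff.mp (le_sup_right : J • ⊤ ≤ range h ⊔ J • ⊤) with htop | heq
  · exact absurd (range_eq_top.mp (eq_top_of_sup_smul_top_eq_top hJ htop)) hh
  · exact sup_eq_right.mp heq

theorem comp_eq_zero_of_range_le_smul_top (hJ : J * J = ⊥)
    {ψ : M →ₗ[A] N} {φ : N →ₗ[A] P} (hψ : range ψ ≤ J • ⊤) (hφ : range φ ≤ J • ⊤) :
    φ ∘ₗ ψ = 0 := by
  rw [← range_eq_bot, range_comp, ← le_bot_iff, ← smul_smul_top_eq_bot hJ (M := P)]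
  calc map φ (range ψ) ≤ map φ (J • ⊤) := map_mono hψ
    _ = J • map φ ⊤ := map_smul'' ..
    _ ≤ J • J • ⊤ := smul_mono_right _ (by rwa [Submodule.map_top])

variable (J M) in
def Module.End.quotSMulTopRingHom :
    Module.End A M →+* Module.End A (M ⧸ J • (⊤ : Submodule A M)) where
  toFun φ := mapQ _ _ φ (smul_top_le_comap_smul_top J φ)
  map_one' := mapQ_id _
  map_mul' φ ψ := mapQ_comp _ _ _ ψ φ _ _
  map_zero' := mapQ_zero _ _
  map_add' φ ψ := by ext; simp

theorem Module.End.isNilpotent_of_mem_ker_quotSMulTopRingHom (hJ : J * J = ⊥)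
    {φ : Module.End A M} (hφ : φ ∈ RingHom.ker (quotSMulTopRingHom J M)) : IsNilpotent φ := by
  have hrange : range φ ≤ J • ⊤ := by
    rintro _ ⟨x, rfl⟩
    simpa [quotSMulTopRingHom] using congr($hφ (Submodule.Quotient.mk x))
  exact ⟨2, by rw [pow_two]; exact comp_eq_zero_of_range_le_smul_top hJ hrange hrange⟩

variable [J.IsTwoSided] [IsSemisimpleRing (A ⧸ J)]

theorem isSemisimpleModule_of_isTorsionBySet (h : Module.IsTorsionBySet A M J) :
    IsSemisimpleModule A M :=
  let _ := h.module
  (h.semilinearMap.isSemisimpleModule_iff_of_bijective Function.bijective_id).2 inferInstance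

theorem isSemisimpleModule_smul_top (hJ : J * J = ⊥) :
    IsSemisimpleModule A ↥(J • (⊤ : Submodule A M)) :=
  isSemisimpleModule_of_isTorsionBySet fun x a ↦ Subtype.ext <| by
    have hax := smul_mem_smul a.2 x.2
    rw [smul_smul_top_eq_bot hJ] at hax
    simpa using hax

theorem isSemisimpleModule_quotient_smul_top :
    IsSemisimpleModule A (M ⧸ J • (⊤ : Submodule A M)) :=
  isSemisimpleModule_of_isTorsionBySet <|
    (Module.isTorsionBySet_quotient_iff _ _).mpr fun _ _ ha ↦ smul_mem_smul ha mem_top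

theorem exists_lift_of_range_le_smul_top (hJ : J * J = ⊥) {p : P →ₗ[A] N}
    (hp : Function.Surjective p) {f : M →ₗ[A] N} (hf : range f ≤ J • ⊤) :
    ∃ g : M →ₗ[A] P, range g ≤ J • ⊤ ∧ p ∘ₗ g = f := by
  have hmap : map p (J • ⊤) = J • ⊤ := by
    rw [map_smul'', Submodule.map_top, range_eq_top.mpr hp]
  have := isSemisimpleModule_smul_top (M := P) hJ
  obtain ⟨g, hg⟩ := IsSemisimpleModule.lifting_property (p.submoduleMap (J • ⊤))
    (submoduleMap_surjective _ _) (f.codRestrict _ fun x ↦ hmap ▸ hf ⟨x, rfl⟩)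
  refine ⟨(J • (⊤ : Submodule A P)).subtype ∘ₗ g,
    (range_comp_le_range _ _).trans (range_subtype _).le, ?_⟩
  ext x
  exact congr(($(LinearMap.congr_fun hg x) : N))

end SquareZeroRadical

section Morphisms

variable {A : Type u} [Ring A] {J : Ideal A}
variable {M N L : Type u} [AddCommGroup M] [Module A M] [AddCommGroup N] [Module A N]
  [AddCommGroup L] [Module A L]

theorem IsSplitEpiLM.surjective {f : M →ₗ[A] N} (hf : IsSplitEpiLM A f) :
    Function.Surjective f :=
  fun y ↦ let ⟨g, hg⟩ := hf; ⟨g y, LinearMap.congr_fun hg y⟩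

theorem IsSplitMonoLM.of_comp {g : M →ₗ[A] L} {h : L →ₗ[A] N}
    (hhg : IsSplitMonoLM A (h ∘ₗ g)) : IsSplitMonoLM A g :=
  let ⟨r, hr⟩ := hhg
  ⟨r ∘ₗ h, (comp_assoc g h r).trans hr⟩

theorem isSplitMonoLM_of_injective [IsSemisimpleModule A N] {f : M →ₗ[A] N}
    (hf : Function.Injective f) : IsSplitMonoLM A f :=
  IsSemisimpleModule.extension_property f hf LinearMap.id

theorem isSplitMonoLM_of_not_range_le [IsSimpleModule A M] {S : Submodule A N}
    [IsSemisimpleModule A (N ⧸ S)] {f : M →ₗ[A] N} (hf : ¬ range f ≤ S) :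
    IsSplitMonoLM A f := by
  have hinj : Function.Injective (S.mkQ ∘ₗ f) := by
    rw [← ker_eq_bot]
    refine (eq_bot_or_eq_top _).resolve_right fun h ↦ hf ?_
    rwa [ker_comp, ker_mkQ, ← range_le_iff_comap] at h
  exact (isSplitMonoLM_of_injective hinj).of_comp

theorem not_isSplitMonoLM_of_range_le_smul_top [Nontrivial M] (hJ : J * J = ⊥)
    {g : M →ₗ[A] L} (hg : range g ≤ J • ⊤) : ¬ IsSplitMonoLM A g := by
  rintro ⟨r, hr⟩
  refine smul_top_ne_top hJ (M := M) (top_unique ?_)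
  calc ⊤ = map r (range g) := by rw [← range_comp, hr, range_id]
    _ ≤ map r (J • ⊤) := map_mono hg
    _ = J • map r ⊤ := map_smul'' ..
    _ ≤ J • ⊤ := smul_mono_right _ le_top

theorem not_isSplitMonoLM_of_not_surjective [Nontrivial M] (hN : IsIndecomposableModule A N)
    {f : M →ₗ[A] N} (hf : ¬ Function.Surjective f) : ¬ IsSplitMonoLM A f := by
  rintro ⟨r, hr⟩
  have hidem : (f ∘ₗ r) ∘ₗ (f ∘ₗ r) = f ∘ₗ r := by
    rw [comp_assoc, ← comp_assoc r f r, hr, id_comp]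
  rcases hN.2 _ hidem with h0 | hid
  · have : (LinearMap.id : M →ₗ[A] M) = 0 := calc
      LinearMap.id = r ∘ₗ (f ∘ₗ r) ∘ₗ f := by rw [comp_assoc, hr, comp_id, hr]
      _ = 0 := by rw [h0, zero_comp, comp_zero]
    exact one_ne_zero (α := Module.End A M) this
  · exact hf (IsSplitEpiLM.surjective ⟨r, hid⟩)

theorem IsIndecomposableModule.isSimpleModule [IsSemisimpleModule A M]
    (hM : IsIndecomposableModule A M) : IsSimpleModule A M := by
  have := hM.1
  refine { eq_bot_or_eq_top := fun W ↦ ?_ }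
  obtain ⟨W', hW⟩ := exists_isCompl W
  rcases hM.2 _ (isIdempotentElem_projection hW) with h0 | hid
  · exact .inl (by rw [← range_projection hW, h0, range_zero])
  · exact .inr (by rw [← range_projection hW, hid, range_id])

theorem IsIndecomposableModule.quotient_smul_top [Module.Projective A M] (hJ : J * J = ⊥)
    (hM : IsIndecomposableModule A M) :
    IsIndecomposableModule A (M ⧸ J • (⊤ : Submodule A M)) := by
  have := hM.1
  refine ⟨Submodule.Quotient.nontrivial_iff.mpr (smul_top_ne_top hJ), fun π hπ ↦ ?_⟩
  obtain ⟨φ, hφ⟩ := Module.projective_lifting_property (J • (⊤ : Submodule A M)).mkQ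
    (π ∘ₗ (J • (⊤ : Submodule A M)).mkQ) (mkQ_surjective _)
  obtain ⟨e, he, rfl⟩ := exists_isIdempotentElem_eq_of_ker_isNilpotent
    (Module.End.quotSMulTopRingHom J M)
    (fun _ ↦ Module.End.isNilpotent_of_mem_ker_quotSMulTopRingHom hJ) π
    ⟨φ, by ext x; exact LinearMap.congr_fun hφ x⟩ hπ
  rcases hM.2 e he with rfl | rfl
  · exact .inl (map_zero _)
  · exact .inr (map_one _)

theorem IsIndecomposableModule.isCoatom_smul_top [J.IsTwoSided] [IsSemisimpleRing (A ⧸ J)]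
    [Module.Projective A M] (hJ : J * J = ⊥) (hM : IsIndecomposableModule A M) :
    IsCoatom (J • (⊤ : Submodule A M)) :=
  have := isSemisimpleModule_quotient_smul_top (M := M) (J := J)
  isSimpleModule_iff_isCoatom.mp (hM.quotient_smul_top hJ).isSimpleModule

theorem IsIrreducibleLM.ne_zero [Nontrivial M] [Nontrivial N] {f : M →ₗ[A] N}
    (hf : IsIrreducibleLM A f) : f ≠ 0 := by
  rintro rfl
  rcases hf.2.2 PUnit 0 0 (comp_zero _).symm with ⟨r, hr⟩ | ⟨s, hs⟩
  · exact one_ne_zero (α := Module.End A M) (hr.symm.trans (comp_zero r))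
  · exact one_ne_zero (α := Module.End A N) (hs.symm.trans (zero_comp s))

theorem IsIrreducibleLM.injective [IsSimpleModule A M] [Nontrivial N] {f : M →ₗ[A] N}
    (hf : IsIrreducibleLM A f) : Function.Injective f := by
  have := IsSimpleModule.nontrivial A M
  rw [← ker_eq_bot]
  exact (eq_bot_or_eq_top _).resolve_right fun h ↦ hf.ne_zero (ker_eq_top.mp h)

variable [J.IsTwoSided] [IsSemisimpleRing (A ⧸ J)]

theorem IsIrreducibleLM.projective [IsSimpleModule A M] [Module.Finite A N] (hJ : J * J = ⊥)
    {f : M →ₗ[A] N} (hf : IsIrreducibleLM A f) : Module.Projective A N := by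
  have := isSemisimpleModule_quotient_smul_top (M := N) (J := J)
  have := IsSimpleModule.nontrivial A M
  have hfJ : range f ≤ J • ⊤ := by_contra fun h ↦ hf.1 (isSplitMonoLM_of_not_range_le h)
  obtain ⟨n, p, hp⟩ := Module.Finite.exists_fin' A N
  obtain ⟨g, hgJ, rfl⟩ := exists_lift_of_range_le_smul_top hJ hp hfJ
  rcases hf.2.2 _ g p rfl with hg | ⟨s, hs⟩
  · exact absurd hg (not_isSplitMonoLM_of_range_le_smul_top hJ hgJ)
  · exact Module.Projective.of_split s p hs

theorem isIrreducibleLM_of_injective [IsSimpleModule A M] [Module.Projective A N]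
    (hJ : J * J = ⊥) (hN : IsIndecomposableModule A N) (hNs : ¬ IsSimpleModule A N)
    {f : M →ₗ[A] N} (hf : Function.Injective f) : IsIrreducibleLM A f := by
  have := IsSimpleModule.nontrivial A M
  have hsurj : ¬ Function.Surjective f := fun hs ↦
    hNs (IsSimpleModule.congr (LinearEquiv.ofBijective f ⟨hf, hs⟩).symm)
  refine ⟨not_isSplitMonoLM_of_not_surjective hN hsurj, fun h ↦ hsurj h.surjective,
    fun L _ _ _ g h hfgh ↦ ?_⟩
  by_cases hh : Function.Surjective h
  · exact .inr (Module.projective_lifting_property h LinearMap.id hh)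
  have hhJ := range_le_smul_top_of_not_surjective hJ (hN.isCoatom_smul_top hJ) hh
  have hfJ : ∀ x, f x ∈ J • ⊤ := fun x ↦ hhJ ⟨g x, by rw [hfgh]; rfl⟩
  have hcomp : (h.codRestrict _ fun y ↦ hhJ ⟨y, rfl⟩) ∘ₗ g = f.codRestrict _ hfJ := by
    ext x; simp [hfgh]
  have := isSemisimpleModule_smul_top (M := N) hJ
  have hsplit := isSplitMonoLM_of_injective ((injective_codRestrict_iff (f := f) hfJ).mpr hf)
  exact .inl (IsSplitMonoLM.of_comp (hcomp ▸ hsplit))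

end Morphisms

theorem stmt13_general (K : Type u) [CommRing K] [IsArtinianRing K]
    (A : Type u) [Ring A] [Algebra K A] [Module.Finite K A]
    (J : Ideal A) (hJdef : J = Ideal.jacobson (⊥ : Ideal A)) (hJ2 : J * J = ⊥)
    (U : Type u) [AddCommGroup U] [Module A U]
    (hUsimple : IsSimpleModule A U)
    (N : Type u) [AddCommGroup N] [Module A N] [Module.Finite A N]
    (hNindec : IsIndecomposableModule A N)
    (f : U →ₗ[A] N) :
    IsIrreducibleLM A f ↔
      (Function.Injective f ∧ Module.Projective A N ∧ ¬ IsSimpleModule A N) := by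
  have : IsArtinianRing A := .of_finite K A
  obtain rfl : J = Ring.jacobson A := hJdef.trans Ideal.jacobson_bot
  have := hNindec.1
  constructor
  · intro hf
    exact ⟨hf.injective, hf.projective hJ2,
      fun hNs ↦ hf.1 (isSplitMonoLM_of_injective hf.injective)⟩
  · rintro ⟨hinj, hproj, hNs⟩
    exact isIrreducibleLM_of_injective hJ2 hNindec hNs hinj

/-- Let `A` be a connected Artin algebra with `rad(A)² = 0` and `U` a simple non-injective
`A`-module.  The irreducible morphisms from `U` to an indecomposable module `N` are exactly
the embeddings of `U` into non-simple indecomposable projective modules (necessarily as a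
copy of `U` inside `rad N`). -/
theorem stmt13 (K : Type u) [CommRing K] [IsArtinianRing K]
    (A : Type u) [Ring A] [Algebra K A] [Module.Finite K A]
    (hconn : ∀ e : A, IsIdempotentElem e → e ∈ Set.center A → e = 0 ∨ e = 1)
    (J : Ideal A) (hJdef : J = Ideal.jacobson (⊥ : Ideal A)) (hJ2 : J * J = ⊥)
    (U : Type u) [AddCommGroup U] [Module A U] [Module.Finite A U]
    (hUsimple : IsSimpleModule A U) (hUnotinj : ¬ Module.Injective A U)
    (N : Type u) [AddCommGroup N] [Module A N] [Module.Finite A N]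
    (hNindec : IsIndecomposableModule A N)
    (f : U →ₗ[A] N) :
    IsIrreducibleLM A f ↔
      (Function.Injective f ∧ Module.Projective A N ∧ ¬ IsSimpleModule A N) :=
  stmt13_general K A J hJdef hJ2 U hUsimple N hNindec f
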